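/- Let p, r be positive integers and define the p-Catalan numbers by ₚc₀ = 1 and ₚc_k = (1/k)·C(p·k, k−1) for k ≥ 1. Then for every positive integer n, the 'vertical' and 'horizontal' decompositions of the Raney number agree: Σ_λ C(r, λ₁)·C(p·λ₁, λ₂)···C(p·λ_{j-1}, λ_j), summed over all compositions λ = (λ₁, …, λ_j) of n into positive parts, equals Σ ₚc_{i₁}·ₚc_{i₂}···ₚc_{i_r}, summed over all r-tuples (i₁, …, i_r) of nonnegative integers with i₁ + ⋯ + i_r = n. (The equality may be read in the rational numbers.) -/

import Mathlib

/-!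
Let `F = ∑ₖ ₚcₖ Xᵏ`. The right-hand side is the coefficient of `Xⁿ` in `Fʳ`. The Raney numbers
`R_{p,r}(n)` satisfy the Pascal-type recurrence `R_{p,r+1}(n+1) = R_{p,r}(n+1) + R_{p,p+r}(n)`,
which by induction on `n` gives `[Xⁿ] Fʳ = R_{p,r}(n)`; in particular `[Xⁿ] Fᵖ = ₚc_{n+1}`, i.e.
`F = 1 + X Fᵖ`. Expanding `Fʳ = (1 + X Fᵖ)ʳ` binomially gives
`[Xⁿ] Fʳ = ∑ₐ C(r, a) [X^{n-a}] F^{pa}`, and iterating this along the first block of a composition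
turns `[Xⁿ] Fʳ` into the left-hand side.
-/

/-- The product `C(prev, λ₁) · C(p·λ₁, λ₂) · ⋯ · C(p·λ_{j-1}, λ_j)` along a list of parts,
where the first binomial's top is `prev` and each subsequent top is `p` times the
previous part. -/
def raneyChainProd (p : ℕ) : ℕ → List ℕ → ℕ
  | _, [] => 1
  | prev, a :: t => prev.choose a * raneyChainProd p (p * a) t

/-- The `p`-Catalan numbers: `ₚc₀ = 1` and `ₚc_k = (1/k)·C(p·k, k-1)` for `k ≥ 1`. -/
def pCatalan (p : ℕ) : ℕ → ℚ
  | 0 => 1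
  | k + 1 => (1 / (k + 1 : ℚ)) * ((p * (k + 1)).choose k)

open PowerSeries Finset

theorem PowerSeries.coeff_pow_eq_sum_antidiagonalTuple {R : Type*} [CommSemiring R]
    (φ : R⟦X⟧) (r n : ℕ) :
    coeff n (φ ^ r) = ∑ f ∈ Nat.antidiagonalTuple r n, ∏ i, coeff (f i) φ := by
  rw [← Fin.prod_const, coeff_prod, finsuppAntidiag, sum_map,
    ← piAntidiag_univ_fin_eq_antidiagonalTuple]
  exact sum_attach (piAntidiag univ n) fun f => ∏ i, coeff (f i) φ

namespace Composition

variable {M : Type*} [AddCommMonoid M]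

theorem sum_blocks_zero (g : List ℕ → M) : ∑ c : Composition 0, g c.blocks = g [] := by
  simp [fun c : Composition 0 => c.blocks_eq_nil.2 rfl, composition_card]

theorem exists_blocks_eq_cons {n : ℕ} (c : Composition (n + 1)) :
    ∃ a t, c.blocks = (a + 1) :: t ∧ a + t.sum = n := by
  rcases h : c.blocks with _ | ⟨b, t⟩
  · simp [c.blocks_eq_nil] at h
  · have hb := c.one_le_blocks (h ▸ List.mem_cons_self)
    have hs := c.blocks_sum
    rw [h, List.sum_cons] at hs
    exact ⟨b - 1, t, by rw [Nat.sub_add_cancel hb], by omega⟩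

theorem sum_blocks_succ (n : ℕ) (g : List ℕ → M) :
    ∑ c : Composition (n + 1), g c.blocks =
      ∑ a ∈ range (n + 1), ∑ c : Composition (n - a), g ((a + 1) :: c.blocks) := by
  rw [sum_sigma']
  refine sum_bij' (fun c _ => ⟨c.blocks.headI - 1, c.blocks.tail, ?_, ?_⟩)
    (fun x hx => ⟨(x.1 + 1) :: x.2.blocks, ?_, ?_⟩) ?_ ?_ ?_ ?_ ?_
  · exact fun hi => c.blocks_pos (List.mem_of_mem_tail hi)
  · obtain ⟨a, t, hc, hs⟩ := c.exists_blocks_eq_cons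
    simp [hc, ← hs]
  · rintro i (_ | ⟨_, hi⟩)
    exacts [Nat.succ_pos _, x.2.blocks_pos hi]
  · simp only [mem_sigma, mem_range] at hx
    simp only [List.sum_cons, x.2.blocks_sum]
    omega
  · intro c _
    obtain ⟨a, t, hc, hs⟩ := c.exists_blocks_eq_cons
    simp only [hc, List.headI_cons, add_tsub_cancel_right, mem_sigma, mem_range, mem_univ,
      and_true]
    omega
  · simp
  · intro c _
    obtain ⟨a, t, hc, -⟩ := c.exists_blocks_eq_cons
    ext1
    simp [hc]
  · intro x _
    rfl
  · intro c _
    obtain ⟨a, t, hc, -⟩ := c.exists_blocks_eq_cons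
    simp [hc]

end Composition

section FunctionalEquation

variable {R : Type*} [CommSemiring R] {p : ℕ} {F : R⟦X⟧}

theorem coeff_pow_eq_sum_choose_of_eq_one_add_X_mul_pow (hF : F = 1 + X * F ^ p) (r n : ℕ) :
    coeff n (F ^ r) = ∑ a ∈ range (n + 1), r.choose a * coeff (n - a) (F ^ (p * a)) := by
  set T : ℕ → R := fun a => r.choose a * coeff n (X ^ a * F ^ (p * a))
  have hbinomial : coeff n (F ^ r) = ∑ a ∈ range (r + 1), T a := by
    rw [hF, add_comm, add_pow, map_sum]
    refine sum_congr rfl fun a _ => ?_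
    rw [one_pow, mul_one, mul_pow, ← pow_mul, ← map_natCast (C (R := R)), coeff_mul_C, mul_comm]
  calc coeff n (F ^ r) = ∑ a ∈ range (r + n + 1), T a := by
        refine hbinomial.trans (sum_subset (range_subset_range.2 (by omega)) fun a _ ha => ?_)
        simp [T, Nat.choose_eq_zero_of_lt (show r < a by simpa using ha)]
    _ = ∑ a ∈ range (n + 1), T a := by
        refine (sum_subset (range_subset_range.2 (by omega)) fun a _ ha => ?_).symm
        simp [T, coeff_X_pow_mul', show ¬a ≤ n by simpa using ha]
    _ = _ := sum_congr rfl fun a ha => by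
        simp [T, coeff_X_pow_mul', show a ≤ n by simpa [Nat.lt_succ_iff] using ha]

theorem coeff_pow_eq_sum_raneyChainProd (hF : F = 1 + X * F ^ p) (n r : ℕ) :
    coeff n (F ^ r) = ∑ c : Composition n, (raneyChainProd p r c.blocks : R) := by
  induction n using Nat.strong_induction_on generalizing r with
  | _ n ih =>
  cases n with
  | zero =>
    have hF0 : constantCoeff F = 1 := by simpa using congrArg constantCoeff hF
    rw [Composition.sum_blocks_zero fun l => (raneyChainProd p r l : R)]
    simp [raneyChainProd, hF0]
  | succ m =>
    rw [coeff_pow_eq_sum_choose_of_eq_one_add_X_mul_pow hF, sum_range_succ',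
      Composition.sum_blocks_succ m fun l => (raneyChainProd p r l : R)]
    simp only [raneyChainProd, Nat.cast_mul, ← mul_sum]
    simp [ih _ (Nat.lt_succ_of_le (Nat.sub_le m _)), coeff_one]

end FunctionalEquation

/-- The Raney number `R_{p,r}(n) = r / (n p + r) · C(n p + r, n)`, normalised by `R_{p,r}(0) = 1`
also for `r = 0` (where the formula gives `0`), so that it is `[Xⁿ] Fʳ` for all `r`. -/
def raney (p r : ℕ) : ℕ → ℚ
  | 0 => 1
  | n + 1 => r / ((n + 1) * p + r : ℕ) * ((n + 1) * p + r).choose (n + 1)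

theorem raney_eq_of_ne_zero {p r n : ℕ} (h : n * p + r ≠ 0) :
    raney p r n = r / (n * p + r : ℕ) * (n * p + r).choose n := by
  cases n with
  | zero => simp_all [raney]
  | succ n => rfl

theorem raney_succ_succ {p : ℕ} (hp : 0 < p) (r n : ℕ) :
    raney p (r + 1) (n + 1) = raney p r (n + 1) + raney p (p + r) n := by
  set N := (n + 1) * p + r with hN
  have hN0 : (N : ℚ) ≠ 0 := by positivity
  have hleft : raney p (r + 1) (n + 1) = (r + 1) / (N + 1 : ℕ) * (N + 1).choose (n + 1) := by
    simp [raney, hN, add_assoc]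
  have hright : raney p (p + r) n = (p + r) / N * N.choose n := by
    rw [raney_eq_of_ne_zero (by positivity)]
    push_cast [show n * p + (p + r) = N by rw [hN]; ring]
    rfl
  have hpascal : ((N + 1).choose (n + 1) : ℚ) = N.choose n + N.choose (n + 1) := by
    exact_mod_cast Nat.choose_succ_succ' N n
  have habsorb : ((N + 1) * N.choose n : ℚ) = (N + 1).choose (n + 1) * (n + 1) := by
    exact_mod_cast Nat.add_one_mul_choose_eq N n
  have hNq : (N : ℚ) = (n + 1) * p + r := by rw [hN]; push_cast; ring
  rw [hleft, hright, raney, ← hN]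
  push_cast
  field_simp
  linear_combination ((r + 1) * N - p * (n + 1) : ℚ) * hpascal - p * habsorb
    + (N.choose n + N.choose (n + 1) : ℚ) * hNq

theorem pCatalan_succ_eq_raney {p : ℕ} (hp : 0 < p) (n : ℕ) :
    pCatalan p (n + 1) = raney p p n := by
  cases n with
  | zero => simp [pCatalan, raney]
  | succ n =>
    rw [raney, show (n + 1) * p + p = p * (n + 1 + 1) by ring, pCatalan]
    have : (p : ℚ) ≠ 0 := by positivity
    push_cast
    field_simp

theorem coeff_mk_pCatalan_pow {p : ℕ} (hp : 0 < p) (n r : ℕ) :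
    coeff n (PowerSeries.mk (pCatalan p) ^ r) = raney p r n := by
  induction n using Nat.strong_induction_on generalizing r with
  | _ n ih =>
  cases n with
  | zero => simp [raney, pCatalan]
  | succ n =>
    induction r with
    | zero => simp [raney, coeff_one]
    | succ r ihr =>
      set F := PowerSeries.mk (pCatalan p)
      have htail : ∑ ij ∈ antidiagonal n, coeff (ij.1 + 1) F * coeff ij.2 (F ^ r) =
          coeff n (F ^ p * F ^ r) := by
        rw [coeff_mul]
        refine sum_congr rfl fun ij hij => ?_
        rw [coeff_mk, pCatalan_succ_eq_raney hp, ← ih ij.1 (Nat.antidiagonal.fst_lt hij)]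
      rw [pow_succ', coeff_mul, Nat.sum_antidiagonal_succ, htail, ← pow_add,
        ih n n.lt_succ_self, ihr, raney_succ_succ hp]
      simp [F, pCatalan]

theorem mk_pCatalan_eq_one_add_X_mul_pow {p : ℕ} (hp : 0 < p) :
    PowerSeries.mk (pCatalan p) = 1 + X * PowerSeries.mk (pCatalan p) ^ p := by
  ext (_ | n)
  · simp [pCatalan]
  · simp [coeff_mk_pCatalan_pow hp, pCatalan_succ_eq_raney hp]

theorem composition_sum_eq_pCatalan_sum_general (p r n : ℕ) (hp : 0 < p) :
    ∑ c : Composition n, (raneyChainProd p r c.blocks : ℚ) =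
      ∑ f ∈ Finset.Nat.antidiagonalTuple r n, ∏ i, pCatalan p (f i) := by
  rw [← coeff_pow_eq_sum_raneyChainProd (mk_pCatalan_eq_one_add_X_mul_pow hp),
    coeff_pow_eq_sum_antidiagonalTuple]
  simp only [coeff_mk]

/-- The "vertical" (composition) and "horizontal" (Hilton–Pedersen) decompositions of the
Raney number agree:
`Σ_λ C(r, λ₁)·C(p·λ₁, λ₂)···C(p·λ_{j-1}, λ_j) = Σ_{i₁+⋯+i_r = n} ₚc_{i₁}···ₚc_{i_r}`. -/
theorem composition_sum_eq_pCatalan_sum (p r n : ℕ) (hp : 0 < p) (hr : 0 < r) (hn : 0 < n) :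
    ∑ c : Composition n, (raneyChainProd p r c.blocks : ℚ) =
      ∑ f ∈ Finset.Nat.antidiagonalTuple r n, ∏ i, pCatalan p (f i) :=
  composition_sum_eq_pCatalan_sum_general p r n hp
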